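/- arXiv:1509.06121 — 7 statements merged into one kernel-verified Lean document; each statement's English description precedes it below -/
import Mathlib

section
/- Let Y be a p×n real matrix with p > n such that YᵀY is invertible, let S := (1/n)YYᵀ, let ȳ := (1/n)Y𝟙 (𝟙 the all-ones n-vector), and let S̃ := S - ȳȳᵀ. Let S⁺ and S̃⁺ be the Moore–Penrose inverses of S and S̃ respectively (i.e., matrices satisfying the four Penrose conditions). Then the empirical spectral distribution functions of S̃⁺ and S⁺ satisfy sup over t ∈ ℝ of |F^{S̃⁺}(t) − F^{S⁺}(t)| ≤ 2/p. -/
/-!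
The two pseudo-inverses differ by a matrix of rank at most two, and a perturbation of rank `r`
moves the eigenvalue counting function of a symmetric matrix by at most `r`.

A symmetric matrix commutes with its Moore–Penrose inverse, so `S⁺` and `S̃⁺` are group
inverses. Since `ȳ` lies in the column space of `Y`, which is that of `YYᵀ`, the row space of
`S̃ = S - ȳȳᵀ` lies in that of `S`, and then
`S̃⁺ - S⁺ = S̃⁺ (S - S̃) S⁺ - (1 - S̃⁺ S̃) (S - S̃) S⁺ S⁺`,
a difference of two matrices of rank at most one.

The counting bound is a Weyl-type interlacing: on the span of the eigenvectors of `A` with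
eigenvalue `≤ t`, intersected with the span of the eigenvectors of `B` with eigenvalue `> t`
and with `ker (A - B)`, the quadratic forms of `A` and `B` agree, yet one is `≤ t‖x‖²` and the
other `> t‖x‖²`. So the intersection is trivial, and counting dimensions gives the bound.
-/
open Matrix

/-- Empirical spectral distribution function of a real symmetric matrix:
`F^A(t) = (1/p) · #{i : λᵢ(A) ≤ t}`. -/
noncomputable def esdF {p : ℕ} {A : Matrix (Fin p) (Fin p) ℝ}
    (hA : A.IsHermitian) (t : ℝ) : ℝ :=
  (Finset.univ.filter fun i => hA.eigenvalues i ≤ t).card / p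

open Module Submodule
open scoped RealInnerProductSpace

namespace Matrix

section Rank

variable {m n K : Type*} [Fintype n] [Field K]

theorem rank_add_le (A B : Matrix m n K) : (A + B).rank ≤ A.rank + B.rank :=
  (Submodule.finrank_mono (by rw [mulVecLin_add]; exact LinearMap.range_add_le _ _)).trans
    (Submodule.finrank_add_le_finrank_add_finrank _ _)

theorem rank_neg (A : Matrix m n K) : (-A).rank = A.rank := by
  have : (-A).mulVecLin = -A.mulVecLin := LinearMap.ext fun _ => neg_mulVec _ _
  rw [rank, rank, this, LinearMap.range_neg]

theorem rank_sub_le (A B : Matrix m n K) : (A - B).rank ≤ A.rank + B.rank := by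
  simpa only [sub_eq_add_neg, rank_neg] using rank_add_le A (-B)

theorem rank_sub_comm (A B : Matrix m n K) : (A - B).rank = (B - A).rank := by
  rw [← neg_sub, rank_neg]

theorem range_mulVecLin_self_mul_transpose {R : Type*} [Fintype m] [Field R] [LinearOrder R]
    [IsStrictOrderedRing R] (A : Matrix m n R) :
    LinearMap.range (A * Aᵀ).mulVecLin = LinearMap.range A.mulVecLin := by
  refine Submodule.eq_of_le_of_finrank_eq ?_ (rank_self_mul_transpose A)
  rw [mulVecLin_mul]
  exact LinearMap.range_comp_le_range _ _

theorem finrank_ker_toEuclideanLin_add_rank {ι 𝕜 : Type*} [RCLike 𝕜] [Fintype ι]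
    [DecidableEq ι] (M : Matrix ι ι 𝕜) :
    finrank 𝕜 (LinearMap.ker (toEuclideanLin M)) + M.rank = Fintype.card ι := by
  rw [M.rank_eq_finrank_range_toLin (PiLp.basisFun 2 𝕜 ι) (PiLp.basisFun 2 𝕜 ι),
    ← toLpLin_eq_toLin, add_comm, LinearMap.finrank_range_add_finrank_ker,
    finrank_euclideanSpace]

end Rank

section Symm

variable {n K : Type*} [Fintype n] [Field K]

theorem IsSymm.commute_of_isSymm_mul {A B : Matrix n n K} (hA : A.IsSymm) (hB : B.IsSymm)
    (hAB : (A * B).IsSymm) : Commute A B := by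
  have := hAB.eq
  rw [transpose_mul, hA.eq, hB.eq] at this
  exact this.symm

theorem IsSymm.sub_vecMulVec_mulVec [DecidableEq n] {A : Matrix n n K} (hA : A.IsSymm)
    (z : n → K) : A - vecMulVec (A *ᵥ z) (A *ᵥ z) = (1 - vecMulVec (A *ᵥ z) z) * A := by
  nth_rw 3 [← hA.eq]
  rw [mulVec_transpose, ← vecMulVec_mul, sub_mul, one_mul]

end Symm

/-- For symmetric `A`, the Moore–Penrose inverse is the group inverse. -/
structure IsGroupInverse {n R : Type*} [Fintype n] [Semiring R] (A A' : Matrix n n R) :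
    Prop where
  mul_mul_self : A * A' * A = A
  mul_mul_inv : A' * A * A' = A'
  commute : Commute A A'

namespace IsGroupInverse

section Semiring

variable {n R : Type*} [Fintype n] [Semiring R] {A A' B B' : Matrix n n R}

theorem self_mul_inv_mul_inv (hA : IsGroupInverse A A') : A * A' * A' = A' := by
  rw [hA.commute.eq, hA.mul_mul_inv]

theorem inv_mul_self_mul_self (hA : IsGroupInverse A A') : A' * A * A = A := by
  rw [← hA.commute.eq, hA.mul_mul_self]

theorem inv_mul_inv_mul_self (hA : IsGroupInverse A A') : A' * A' * A = A' := by
  rw [mul_assoc, ← hA.commute.eq, ← mul_assoc, hA.mul_mul_inv]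

theorem self_mul_self_mul_inv (hA : IsGroupInverse A A') : A * A * A' = A := by
  rw [mul_assoc, hA.commute.eq, ← mul_assoc, hA.mul_mul_self]

theorem inv_mul_self_mul_inv_of_eq_mul (hA : IsGroupInverse A A') (hB : IsGroupInverse B B')
    {N : Matrix n n R} (hBA : B = N * A) : B' * A * A' = B' := by
  have hB_eq : B * A * A' = B := by
    rw [hBA, mul_assoc, mul_assoc, ← mul_assoc A A A', hA.self_mul_self_mul_inv]
  calc B' * A * A' = B' * B' * B * A * A' := by rw [hB.inv_mul_inv_mul_self]
    _ = B' * B' * (B * A * A') := by simp only [mul_assoc]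
    _ = B' := by rw [hB_eq, hB.inv_mul_inv_mul_self]

end Semiring

theorem inv_sub_inv_eq {n R : Type*} [Fintype n] [DecidableEq n] [Ring R]
    {A A' B B' : Matrix n n R} (hA : IsGroupInverse A A') (hB : IsGroupInverse B B')
    {N : Matrix n n R} (hBA : B = N * A) :
    B' - A' = B' * (A - B) * A' - (1 - B' * B) * (A - B) * (A' * A') := by
  have h₁ : A * (A' * A') = A' := by rw [← mul_assoc, hA.self_mul_inv_mul_inv]
  have h₂ : B' * (B * (B * (A' * A'))) = B * (A' * A') := by
    simp only [← mul_assoc, hB.inv_mul_self_mul_self]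
  have h₃ : B' * (A * A') = B' := by
    rw [← mul_assoc, hA.inv_mul_self_mul_inv_of_eq_mul hB hBA]
  simp only [mul_sub, sub_mul, one_mul, mul_assoc, h₁, h₂, h₃]
  abel

theorem rank_inv_sub_inv_le {n K : Type*} [Fintype n] [DecidableEq n] [Field K]
    {A A' B B' : Matrix n n K} (hA : IsGroupInverse A A') (hB : IsGroupInverse B B')
    (hBA : ∃ N, B = N * A) : (B' - A').rank ≤ 2 * (A - B).rank := by
  obtain ⟨N, hN⟩ := hBA
  have rank_mul_mul_le (X Y Z : Matrix n n K) : (X * Y * Z).rank ≤ Y.rank :=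
    (rank_mul_le_left _ _).trans (rank_mul_le_right _ _)
  rw [hA.inv_sub_inv_eq hB hN, two_mul]
  exact (rank_sub_le _ _).trans (add_le_add (rank_mul_mul_le _ _ _) (rank_mul_mul_le _ _ _))

end IsGroupInverse

end Matrix

theorem Submodule.finrank_add_finrank_add_finrank_le_of_disjoint {K V : Type*} [DivisionRing K]
    [AddCommGroup V] [Module K V] [FiniteDimensional K V] {U W X : Submodule K V}
    (h : Disjoint U (W ⊓ X)) : finrank K U + finrank K W + finrank K X ≤ 2 * finrank K V := by
  have hU := finrank_add_finrank_le_of_disjoint h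
  have hWX := finrank_sup_add_finrank_inf_eq W X
  have hsup := (W ⊔ X).finrank_le
  omega

namespace OrthonormalBasis

variable {ι 𝕜 E : Type*} [RCLike 𝕜] [NormedAddCommGroup E] [InnerProductSpace 𝕜 E] [Fintype ι]

theorem finrank_span_image (b : OrthonormalBasis ι 𝕜 E) (s : Finset ι) :
    finrank 𝕜 (span 𝕜 (b '' s)) = s.card := by
  rw [Set.image_eq_range]
  exact (finrank_span_eq_card
    (b.orthonormal.linearIndependent.comp _ Subtype.val_injective)).trans (Fintype.card_coe s)

theorem inner_eq_zero_of_mem_span_image (b : OrthonormalBasis ι 𝕜 E) {s : Set ι} {x : E}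
    (hx : x ∈ span 𝕜 (b '' s)) {i : ι} (hi : i ∉ s) : inner 𝕜 (b i) x = 0 := by
  rw [← b.coe_toBasis, Basis.mem_span_image] at hx
  rw [← b.repr_apply_apply, ← b.coe_toBasis_repr_apply]
  exact Finsupp.notMem_support_iff.mp fun h => hi (hx h)

end OrthonormalBasis

namespace Matrix.IsHermitian

variable {ι : Type*} [Fintype ι] [DecidableEq ι] {A : Matrix ι ι ℝ} (hA : A.IsHermitian)

theorem inner_toEuclideanLin_self (x : EuclideanSpace ℝ ι) :
    ⟪x, toEuclideanLin A x⟫ = ∑ i, hA.eigenvalues i * ⟪hA.eigenvectorBasis i, x⟫ ^ 2 := by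
  rw [← hA.eigenvectorBasis.sum_inner_mul_inner]
  refine Finset.sum_congr rfl fun i _ => ?_
  have hb : toEuclideanLin A (hA.eigenvectorBasis i) =
      hA.eigenvalues i • hA.eigenvectorBasis i := by
    simp [toLpLin_apply, hA.mulVec_eigenvectorBasis i]
  rw [← isSymmetric_toEuclideanLin_iff.mpr hA, hb, real_inner_smul_left, real_inner_comm x]
  ring

theorem inner_toEuclideanLin_self_le {s : Set ι} {t : ℝ} (hs : ∀ i ∈ s, hA.eigenvalues i ≤ t)
    {x : EuclideanSpace ℝ ι} (hx : x ∈ span ℝ (hA.eigenvectorBasis '' s)) :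
    ⟪x, toEuclideanLin A x⟫ ≤ t * ‖x‖ ^ 2 := by
  rw [hA.inner_toEuclideanLin_self, ← hA.eigenvectorBasis.sum_sq_inner_right, Finset.mul_sum]
  refine Finset.sum_le_sum fun i _ => ?_
  by_cases hi : i ∈ s
  · exact mul_le_mul_of_nonneg_right (hs i hi) (sq_nonneg _)
  · simp [hA.eigenvectorBasis.inner_eq_zero_of_mem_span_image hx hi]

theorem lt_inner_toEuclideanLin_self {s : Set ι} {t : ℝ} (hs : ∀ i ∈ s, t < hA.eigenvalues i)
    {x : EuclideanSpace ℝ ι} (hx : x ∈ span ℝ (hA.eigenvectorBasis '' s)) (hx₀ : x ≠ 0) :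
    t * ‖x‖ ^ 2 < ⟪x, toEuclideanLin A x⟫ := by
  have hcoord (i : ι) (hi : i ∉ s) : ⟪hA.eigenvectorBasis i, x⟫ = 0 :=
    hA.eigenvectorBasis.inner_eq_zero_of_mem_span_image hx hi
  obtain ⟨j, -, hj⟩ := Finset.exists_ne_zero_of_sum_ne_zero <|
    (hA.eigenvectorBasis.sum_sq_inner_right x).trans_ne (by positivity)
  have hjs : j ∈ s := by_contra fun h => hj (by rw [hcoord j h, sq, zero_mul])
  rw [hA.inner_toEuclideanLin_self, ← hA.eigenvectorBasis.sum_sq_inner_right, Finset.mul_sum]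
  refine Finset.sum_lt_sum (fun i _ => ?_) ⟨j, Finset.mem_univ j, ?_⟩
  · by_cases hi : i ∈ s
    · exact mul_le_mul_of_nonneg_right (hs i hi).le (sq_nonneg _)
    · simp [hcoord i hi]
  · exact mul_lt_mul_of_pos_right (hs j hjs) (lt_of_le_of_ne (sq_nonneg _) (Ne.symm hj))

theorem card_eigenvalues_le_le_add_rank {B : Matrix ι ι ℝ} (hB : B.IsHermitian) (t : ℝ) :
    (Finset.univ.filter fun i => hA.eigenvalues i ≤ t).card ≤
      (Finset.univ.filter fun i => hB.eigenvalues i ≤ t).card + (A - B).rank := by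
  set sA := Finset.univ.filter fun i => hA.eigenvalues i ≤ t
  set sB := Finset.univ.filter fun i => t < hB.eigenvalues i
  have hdisj : Disjoint (span ℝ (hA.eigenvectorBasis '' sA))
      (span ℝ (hB.eigenvectorBasis '' sB) ⊓ LinearMap.ker (toEuclideanLin (A - B))) := by
    rw [Submodule.disjoint_def]
    intro x hxA hxBK
    obtain ⟨hxB, hxK⟩ := Submodule.mem_inf.mp hxBK
    by_contra hx₀
    have hAB : toEuclideanLin A x = toEuclideanLin B x := by
      rwa [LinearMap.mem_ker, map_sub, LinearMap.sub_apply, sub_eq_zero] at hxK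
    have hle := hA.inner_toEuclideanLin_self_le (t := t) (by simp [sA]) hxA
    have hlt := hB.lt_inner_toEuclideanLin_self (t := t) (by simp [sB]) hxB hx₀
    rw [hAB] at hle
    exact hle.not_gt hlt
  have hdim := Submodule.finrank_add_finrank_add_finrank_le_of_disjoint hdisj
  rw [hA.eigenvectorBasis.finrank_span_image, hB.eigenvectorBasis.finrank_span_image,
    finrank_euclideanSpace] at hdim
  have hker := (A - B).finrank_ker_toEuclideanLin_add_rank
  have hcard : (Finset.univ.filter fun i => hB.eigenvalues i ≤ t).card + sB.card =
      Fintype.card ι := by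
    simpa only [not_le, Finset.card_univ] using
      Finset.card_filter_add_card_filter_not (s := .univ) (p := fun i => hB.eigenvalues i ≤ t)
  omega

end Matrix.IsHermitian

theorem abs_esdF_sub_esdF_le {p : ℕ} {A B : Matrix (Fin p) (Fin p) ℝ} (hA : A.IsHermitian)
    (hB : B.IsHermitian) (t : ℝ) : |esdF hA t - esdF hB t| ≤ (A - B).rank / p := by
  have h₁ := hA.card_eigenvalues_le_le_add_rank hB t
  have h₂ := hB.card_eigenvalues_le_le_add_rank hA t
  rw [rank_sub_comm B A] at h₂
  unfold esdF
  rw [div_sub_div_same, abs_div, Nat.abs_cast]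
  gcongr
  rw [abs_sub_le_iff, sub_le_iff_le_add', sub_le_iff_le_add']
  exact ⟨mod_cast h₁, mod_cast h₂⟩

theorem stmt_0_general {p n : ℕ} (Y : Matrix (Fin p) (Fin n) ℝ)
    (S : Matrix (Fin p) (Fin p) ℝ) (hS : S = ((n : ℝ)⁻¹) • (Y * Yᵀ))
    (ybar : Fin p → ℝ) (hybar : ybar = ((n : ℝ)⁻¹) • Y.mulVec (fun _ => (1 : ℝ)))
    (St : Matrix (Fin p) (Fin p) ℝ) (hSt : St = S - vecMulVec ybar ybar)
    (Sp Stp : Matrix (Fin p) (Fin p) ℝ)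
    (hSp1 : S * Sp * S = S) (hSp2 : Sp * S * Sp = Sp)
    (hSp3 : (S * Sp)ᵀ = S * Sp)
    (hStp1 : St * Stp * St = St) (hStp2 : Stp * St * Stp = Stp)
    (hStp3 : (St * Stp)ᵀ = St * Stp)
    (hSpH : Sp.IsHermitian) (hStpH : Stp.IsHermitian) :
    ∀ t : ℝ, |esdF hStpH t - esdF hSpH t| ≤ 2 / p := by
  have hS_symm : S.IsSymm := by
    rw [hS, IsSymm, transpose_smul, transpose_mul, transpose_transpose]
  have hSt_symm : St.IsSymm := hSt ▸ hS_symm.sub (transpose_vecMulVec ybar ybar)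
  obtain ⟨z, hz⟩ : ∃ z, S *ᵥ z = ybar := by
    obtain ⟨z, hz⟩ : Y *ᵥ (fun _ => 1) ∈ LinearMap.range (Y * Yᵀ).mulVecLin := by
      rw [range_mulVecLin_self_mul_transpose]
      exact LinearMap.mem_range_self _ _
    exact ⟨z, by rw [hS, hybar, smul_mulVec, ← hz, mulVecLin_apply]⟩
  have hSt_eq : St = (1 - vecMulVec ybar z) * S := by
    rw [hSt, ← hz]
    exact hS_symm.sub_vecMulVec_mulVec z
  have hSp : IsGroupInverse S Sp :=
    ⟨hSp1, hSp2, hS_symm.commute_of_isSymm_mul (isHermitian_iff_isSymm.mp hSpH) hSp3⟩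
  have hStp : IsGroupInverse St Stp :=
    ⟨hStp1, hStp2, hSt_symm.commute_of_isSymm_mul (isHermitian_iff_isSymm.mp hStpH) hStp3⟩
  have hrank : (Stp - Sp).rank ≤ 2 :=
    calc (Stp - Sp).rank ≤ 2 * (S - St).rank := hSp.rank_inv_sub_inv_le hStp ⟨_, hSt_eq⟩
      _ ≤ 2 * 1 := by
        rw [hSt, sub_sub_cancel]
        exact Nat.mul_le_mul_left 2 (rank_vecMulVec_le ybar ybar)
  intro t
  calc |esdF hStpH t - esdF hSpH t|
      ≤ (Stp - Sp).rank / p := abs_esdF_sub_esdF_le hStpH hSpH t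
    _ ≤ 2 / p := by gcongr; exact_mod_cast hrank

theorem stmt_0 {p n : ℕ} (hpn : n < p) (Y : Matrix (Fin p) (Fin n) ℝ)
    (hY : IsUnit (Yᵀ * Y))
    (S : Matrix (Fin p) (Fin p) ℝ) (hS : S = ((n : ℝ)⁻¹) • (Y * Yᵀ))
    (ybar : Fin p → ℝ) (hybar : ybar = ((n : ℝ)⁻¹) • Y.mulVec (fun _ => (1 : ℝ)))
    (St : Matrix (Fin p) (Fin p) ℝ) (hSt : St = S - vecMulVec ybar ybar)
    (Sp Stp : Matrix (Fin p) (Fin p) ℝ)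
    (hSp1 : S * Sp * S = S) (hSp2 : Sp * S * Sp = Sp)
    (hSp3 : (S * Sp)ᵀ = S * Sp) (hSp4 : (Sp * S)ᵀ = Sp * S)
    (hStp1 : St * Stp * St = St) (hStp2 : Stp * St * Stp = Stp)
    (hStp3 : (St * Stp)ᵀ = St * Stp) (hStp4 : (Stp * St)ᵀ = Stp * St)
    (hSpH : Sp.IsHermitian) (hStpH : Stp.IsHermitian) :
    ∀ t : ℝ, |esdF hStpH t - esdF hSpH t| ≤ 2 / p :=
  stmt_0_general Y S hS ybar hybar St hSt Sp Stp hSp1 hSp2 hSp3 hStp1 hStp2 hStp3 hSpH hStpH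
end

section
/- Let c ∈ (1, ∞), σ > 0, and z ∈ ℂ with z ≠ 0. Let s ∈ ℂ be any complex number with s² = (1/z − cσ² + σ²)² − 4σ²/z, define m_P := −(1/z)·(1 + (−1/z + (c−1)σ² + s)/(2σ²c)), and set m := z(c⁻¹ − 2 − z·m_P). Then m satisfies the Marchenko–Pastur equation m·(σ²(1 − c − c·m/z) − 1/z) = 1. -/
/-!
Writing `t = σ²`, multiplying the Marchenko–Pastur equation by `z` turns it into the quadratic
`t c·m² + (1 - t(1 - c)z)·m + z = 0`, whose discriminant is `(s z)²`. Unfolding `m_P` shows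
that `m = (-(1 - t(1 - c)z) + s z) / (2tc)`, which is a root by the quadratic formula.
-/

namespace MarchenkoPastur

variable {K : Type*} [Field K] {c t z s mP m : K}

theorem equation_iff_quadratic (hz : z ≠ 0) :
    m * (t * (1 - c - c * m / z) - 1 / z) = 1 ↔
      t * c * (m * m) + (1 - t * (1 - c) * z) * m + z = 0 := by
  field_simp
  constructor <;> intro h <;> linear_combination (-1 : K) * h

theorem discrim_eq_mul_self (hz : z ≠ 0)
    (hs : s ^ 2 = (1 / z - c * t + t) ^ 2 - 4 * t / z) :
    discrim (t * c) (1 - t * (1 - c) * z) z = (s * z) * (s * z) := by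
  rw [discrim]
  field_simp at hs
  linear_combination (-1 : K) * hs

variable [NeZero (2 : K)]

theorem m_eq_quadratic_root (hc : c ≠ 0) (ht : t ≠ 0) (hz : z ≠ 0)
    (hmP : mP = -(1 / z) * (1 + (-(1 / z) + (c - 1) * t + s) / (2 * t * c)))
    (hm : m = z * (c⁻¹ - 2 - z * mP)) :
    m = (-(1 - t * (1 - c) * z) + s * z) / (2 * (t * c)) := by
  subst hm hmP
  field_simp
  ring

theorem equation_of_explicit_solution (hc : c ≠ 0) (ht : t ≠ 0) (hz : z ≠ 0)
    (hs : s ^ 2 = (1 / z - c * t + t) ^ 2 - 4 * t / z)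
    (hmP : mP = -(1 / z) * (1 + (-(1 / z) + (c - 1) * t + s) / (2 * t * c)))
    (hm : m = z * (c⁻¹ - 2 - z * mP)) :
    m * (t * (1 - c - c * m / z) - 1 / z) = 1 := by
  rw [equation_iff_quadratic hz,
    quadratic_eq_zero_iff (mul_ne_zero ht hc) (discrim_eq_mul_self hz hs)]
  exact Or.inl (m_eq_quadratic_root hc ht hz hmP hm)

end MarchenkoPastur

theorem stmt_3 (c σ : ℝ) (hc : 1 < c) (hσ : 0 < σ) (z : ℂ) (hz : z ≠ 0)
    (s mP m : ℂ)
    (hs : s ^ 2 = (1 / z - (c : ℂ) * (σ : ℂ) ^ 2 + (σ : ℂ) ^ 2) ^ 2 - 4 * (σ : ℂ) ^ 2 / z)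
    (hmP : mP = -(1 / z) * (1 + (-(1 / z) + ((c : ℂ) - 1) * (σ : ℂ) ^ 2 + s)
      / (2 * (σ : ℂ) ^ 2 * (c : ℂ))))
    (hm : m = z * ((c : ℂ)⁻¹ - 2 - z * mP)) :
    m * ((σ : ℂ) ^ 2 * (1 - (c : ℂ) - (c : ℂ) * m / z) - 1 / z) = 1 := by
  have hc0 : (c : ℂ) ≠ 0 := Complex.ofReal_ne_zero.mpr (by positivity)
  have hσ0 : (σ : ℂ) ^ 2 ≠ 0 := pow_ne_zero 2 (Complex.ofReal_ne_zero.mpr hσ.ne')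
  exact MarchenkoPastur.equation_of_explicit_solution hc0 hσ0 hz hs hmP hm
end

section
/- Let Y be a p×n real matrix with p > n such that B := (1/n)YᵀY is invertible, let S⁺ := (1/n)Y·B⁻²·Yᵀ, and let z be a nonzero real number such that S⁺ − z·I_p and B⁻¹ − z·I_n are invertible. Then (1/p)·tr((S⁺ − z·I_p)⁻¹) = ((p − n)/p)·(−1/z) + (1/p)·tr((B⁻¹ − z·I_n)⁻¹). -/
open Matrix

theorem stmt_8 {p n : ℕ} (hpn : n < p) (Y : Matrix (Fin p) (Fin n) ℝ)
    (B : Matrix (Fin n) (Fin n) ℝ) (hBdef : B = ((n : ℝ)⁻¹) • (Yᵀ * Y))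
    (hB : IsUnit B)
    (Sp : Matrix (Fin p) (Fin p) ℝ) (hSp : Sp = ((n : ℝ)⁻¹) • (Y * (B⁻¹ * B⁻¹) * Yᵀ))
    (z : ℝ) (hz : z ≠ 0)
    (h1 : IsUnit (Sp - z • (1 : Matrix (Fin p) (Fin p) ℝ)))
    (h2 : IsUnit (B⁻¹ - z • (1 : Matrix (Fin n) (Fin n) ℝ))) :
    (1 / (p : ℝ)) * ((Sp - z • (1 : Matrix (Fin p) (Fin p) ℝ))⁻¹).trace
      = (((p : ℝ) - (n : ℝ)) / (p : ℝ)) * (-(1 / z))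
        + (1 / (p : ℝ)) * ((B⁻¹ - z • (1 : Matrix (Fin n) (Fin n) ℝ))⁻¹).trace := by
  have hBB : B * B⁻¹ = 1 :=
    Matrix.mul_nonsing_inv B ((Matrix.isUnit_iff_isUnit_det B).mp hB)
  obtain ⟨U, hU, hVU⟩ : ∃ U : Matrix (Fin p) (Fin n) ℝ,
      Sp = U * Yᵀ ∧ Yᵀ * U = B⁻¹ := by
    refine ⟨((n : ℝ)⁻¹) • (Y * (B⁻¹ * B⁻¹)), ?_, ?_⟩
    · rw [hSp, Matrix.smul_mul]
    · rw [Matrix.mul_smul, ← Matrix.mul_assoc, ← Matrix.smul_mul, ← hBdef,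
        ← Matrix.mul_assoc, hBB, Matrix.one_mul]
  set N := B⁻¹ - z • (1 : Matrix (Fin n) (Fin n) ℝ) with hN
  have hNdet : IsUnit N.det := (Matrix.isUnit_iff_isUnit_det N).mp h2
  have hNN : N * N⁻¹ = 1 := Matrix.mul_nonsing_inv N hNdet
  have hNN' : N⁻¹ * N = 1 := Matrix.nonsing_inv_mul N hNdet
  have hBinv : B⁻¹ = N + z • 1 := by rw [hN]; abel
  set E := (-(z⁻¹)) • ((1 : Matrix (Fin p) (Fin p) ℝ) - U * (N⁻¹ * Yᵀ)) with hE
  have hmid : (U * Yᵀ) * (U * (N⁻¹ * Yᵀ)) = U * Yᵀ + z • (U * (N⁻¹ * Yᵀ)) := by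
    have h3 : (U * Yᵀ) * (U * (N⁻¹ * Yᵀ)) = U * ((Yᵀ * U) * (N⁻¹ * Yᵀ)) := by
      rw [Matrix.mul_assoc, ← Matrix.mul_assoc Yᵀ]
    rw [h3, hVU, hBinv, Matrix.add_mul, ← Matrix.mul_assoc N, hNN, Matrix.one_mul,
      Matrix.smul_mul, Matrix.one_mul, Matrix.mul_add, Matrix.mul_smul]
  have inner : (U * Yᵀ - z • 1) * ((1 : Matrix (Fin p) (Fin p) ℝ) - U * (N⁻¹ * Yᵀ))
      = (-z) • 1 := by
    rw [Matrix.sub_mul, Matrix.mul_sub, Matrix.mul_sub, Matrix.mul_one, Matrix.mul_one,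
      hmid, Matrix.smul_mul, Matrix.one_mul]
    module
  have key : (Sp - z • (1 : Matrix (Fin p) (Fin p) ℝ)) * E = 1 := by
    have hc : (-(z⁻¹)) * (-z) = 1 := by field_simp
    rw [hE, hU, Matrix.mul_smul, inner, smul_smul, hc, one_smul]
  have hMinv : (Sp - z • (1 : Matrix (Fin p) (Fin p) ℝ))⁻¹ = E :=
    Matrix.inv_eq_right_inv key
  have ht1 : (U * (N⁻¹ * Yᵀ)).trace = (n : ℝ) + z * (N⁻¹).trace := by
    rw [Matrix.trace_mul_comm, Matrix.mul_assoc, hVU, hBinv, Matrix.mul_add, hNN',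
      Matrix.mul_smul, Matrix.trace_add, Matrix.trace_smul, Matrix.trace_one]
    simp
  have htE : E.trace = (-(z⁻¹)) * ((p : ℝ) - ((n : ℝ) + z * (N⁻¹).trace)) := by
    rw [hE, Matrix.trace_smul, Matrix.trace_sub, ht1, Matrix.trace_one]
    simp
  have hp0 : (p : ℝ) ≠ 0 := by
    exact_mod_cast (Nat.zero_lt_of_lt hpn).ne'
  rw [hMinv, htE]
  field_simp
  ring
end

section
/- Let Y be a p×n real matrix with p > n such that B := (1/n)YᵀY is invertible, let S⁺ := (1/n)Y·B⁻²·Yᵀ, 𝟙 the all-ones vector in ℝⁿ, and ȳ := (1/n)Y𝟙. Then ȳᵀ S⁺ ȳ = 1. -/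
/-!
Since `Yᵀ Y = n B`, sandwiching gives `Yᵀ (Y B⁻² Yᵀ) Y = n² · 1`; writing `ȳ = n⁻¹ Y 𝟙`,
this turns `ȳᵀ S⁺ ȳ` into `n⁻³ · n² · 𝟙ᵀ𝟙 = 1`.
-/

open Matrix

namespace Matrix

variable {m ι R : Type*} [Fintype m] [Fintype ι] [CommRing R]

theorem dotProduct_mulVec_mulVec_mulVec (Y : Matrix m ι R) (M : Matrix m m R) (v w : ι → R) :
    (Y *ᵥ v) ⬝ᵥ (M *ᵥ (Y *ᵥ w)) = v ⬝ᵥ ((Yᵀ * M * Y) *ᵥ w) := by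
  rw [← vecMul_transpose, dotProduct_mulVec, vecMul_vecMul, ← dotProduct_mulVec,
    mulVec_mulVec, Matrix.mul_assoc]

theorem transpose_mul_mul_inv_mul_inv_mul_transpose_mul [DecidableEq ι] {Y : Matrix m ι R}
    {B : Matrix ι ι R} {c : R} (hYB : Yᵀ * Y = c • B) (hB : IsUnit B) :
    Yᵀ * (Y * (B⁻¹ * B⁻¹) * Yᵀ) * Y = c ^ 2 • 1 := by
  have hdet : IsUnit B.det := (isUnit_iff_isUnit_det B).mp hB
  calc Yᵀ * (Y * (B⁻¹ * B⁻¹) * Yᵀ) * Y = (Yᵀ * Y) * B⁻¹ * (B⁻¹ * (Yᵀ * Y)) := by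
        simp only [Matrix.mul_assoc]
    _ = c ^ 2 • ((B * B⁻¹) * (B⁻¹ * B)) := by
        rw [hYB, Matrix.smul_mul, Matrix.smul_mul, Matrix.mul_smul, Matrix.mul_smul, smul_smul,
          sq, Matrix.mul_assoc]
    _ = c ^ 2 • 1 := by rw [mul_nonsing_inv B hdet, nonsing_inv_mul B hdet, Matrix.one_mul]

end Matrix

theorem stmt_9_general {p n : ℕ} (hn : 0 < n) (Y : Matrix (Fin p) (Fin n) ℝ)
    (B : Matrix (Fin n) (Fin n) ℝ) (hBdef : B = ((n : ℝ)⁻¹) • (Yᵀ * Y))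
    (hB : IsUnit B)
    (Sp : Matrix (Fin p) (Fin p) ℝ) (hSp : Sp = ((n : ℝ)⁻¹) • (Y * (B⁻¹ * B⁻¹) * Yᵀ))
    (ybar : Fin p → ℝ) (hybar : ybar = ((n : ℝ)⁻¹) • Y.mulVec (fun _ => (1 : ℝ))) :
    ybar ⬝ᵥ Sp.mulVec ybar = 1 := by
  have hn' : (n : ℝ) ≠ 0 := Nat.cast_ne_zero.mpr hn.ne'
  have hYB : Yᵀ * Y = (n : ℝ) • B := by rw [hBdef, smul_smul, mul_inv_cancel₀ hn', one_smul]
  have hones : (fun _ => (1 : ℝ)) ⬝ᵥ (fun _ : Fin n => (1 : ℝ)) = n := by simp [dotProduct]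
  rw [hybar, hSp, smul_mulVec, mulVec_smul, smul_dotProduct, dotProduct_smul, dotProduct_smul,
    dotProduct_mulVec_mulVec_mulVec, transpose_mul_mul_inv_mul_inv_mul_transpose_mul hYB hB,
    smul_mulVec, one_mulVec, dotProduct_smul, hones]
  simp only [smul_eq_mul]
  field_simp

theorem stmt_9 {p n : ℕ} (hn : 0 < n) (hpn : n < p) (Y : Matrix (Fin p) (Fin n) ℝ)
    (B : Matrix (Fin n) (Fin n) ℝ) (hBdef : B = ((n : ℝ)⁻¹) • (Yᵀ * Y))
    (hB : IsUnit B)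
    (Sp : Matrix (Fin p) (Fin p) ℝ) (hSp : Sp = ((n : ℝ)⁻¹) • (Y * (B⁻¹ * B⁻¹) * Yᵀ))
    (ybar : Fin p → ℝ) (hybar : ybar = ((n : ℝ)⁻¹) • Y.mulVec (fun _ => (1 : ℝ))) :
    ybar ⬝ᵥ Sp.mulVec ybar = 1 :=
  stmt_9_general hn Y B hBdef hB Sp hSp ybar hybar
end

section
/- Let Y be a p×n real matrix with p > n such that B := (1/n)YᵀY is invertible, let S⁺ := (1/n)Y·B⁻²·Yᵀ, 𝟙 the all-ones vector in ℝⁿ, ȳ := (1/n)Y𝟙, and let z be a nonzero real number such that S⁺ − z·I_p and B⁻¹ − z·I_n are invertible. Then ȳᵀ(S⁺ − z·I_p)⁻¹ȳ = −(1/z)·ȳᵀȳ + (1/z)·(1/n)·𝟙ᵀ(B⁻¹ − z·I_n)⁻¹𝟙. -/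
open Matrix

theorem stmt_10 {p n : ℕ} (hpn : n < p) (Y : Matrix (Fin p) (Fin n) ℝ)
    (B : Matrix (Fin n) (Fin n) ℝ) (hBdef : B = ((n : ℝ)⁻¹) • (Yᵀ * Y))
    (hB : IsUnit B)
    (Sp : Matrix (Fin p) (Fin p) ℝ) (hSp : Sp = ((n : ℝ)⁻¹) • (Y * (B⁻¹ * B⁻¹) * Yᵀ))
    (ybar : Fin p → ℝ) (hybar : ybar = ((n : ℝ)⁻¹) • Y.mulVec (fun _ => (1 : ℝ)))
    (z : ℝ) (hz : z ≠ 0)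
    (h1 : IsUnit (Sp - z • (1 : Matrix (Fin p) (Fin p) ℝ)))
    (h2 : IsUnit (B⁻¹ - z • (1 : Matrix (Fin n) (Fin n) ℝ))) :
    ybar ⬝ᵥ ((Sp - z • (1 : Matrix (Fin p) (Fin p) ℝ))⁻¹).mulVec ybar
      = -(1 / z) * (ybar ⬝ᵥ ybar)
        + (1 / z) * ((n : ℝ)⁻¹) *
          ((fun _ => (1 : ℝ)) ⬝ᵥ ((B⁻¹ - z • (1 : Matrix (Fin n) (Fin n) ℝ))⁻¹).mulVec
            (fun _ => (1 : ℝ))) := by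
  set u : Fin n → ℝ := fun _ => (1 : ℝ) with hu
  set c : ℝ := (n : ℝ)⁻¹ with hc
  set M : Matrix (Fin n) (Fin n) ℝ := B⁻¹ - z • (1 : Matrix (Fin n) (Fin n) ℝ) with hM
  set A : Matrix (Fin p) (Fin p) ℝ := Sp - z • (1 : Matrix (Fin p) (Fin p) ℝ) with hA
  have hBB : B * B⁻¹ = 1 := Matrix.mul_nonsing_inv B ((Matrix.isUnit_iff_isUnit_det B).mp hB)
  have hBB' : B⁻¹ * B = 1 := Matrix.nonsing_inv_mul B ((Matrix.isUnit_iff_isUnit_det B).mp hB)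
  have hA1 : A⁻¹ * A = 1 := Matrix.nonsing_inv_mul A ((Matrix.isUnit_iff_isUnit_det A).mp h1)
  have hM1 : M * M⁻¹ = 1 := Matrix.mul_nonsing_inv M ((Matrix.isUnit_iff_isUnit_det M).mp h2)
  have hMM' : M⁻¹ * M = 1 := Matrix.nonsing_inv_mul M ((Matrix.isUnit_iff_isUnit_det M).mp h2)
  -- Sp * Y = Y * B⁻¹
  have hSpY : Sp * Y = Y * B⁻¹ := by
    rw [hSp, Matrix.smul_mul, Matrix.mul_assoc, Matrix.mul_assoc, ← Matrix.mul_smul,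
      ← Matrix.mul_smul, ← hBdef, Matrix.mul_assoc, hBB', Matrix.mul_one]
  have hAY : A * Y = Y * M := by
    rw [hA, hM, Matrix.sub_mul, Matrix.mul_sub, hSpY, Matrix.smul_mul, Matrix.one_mul,
      Matrix.mul_smul, Matrix.mul_one]
  have hInvY : A⁻¹ * Y = Y * M⁻¹ := by
    have h := congrArg (fun X => A⁻¹ * X * M⁻¹) hAY
    simp only [Matrix.mul_assoc] at h
    rw [hM1, Matrix.mul_one] at h
    rw [← Matrix.mul_assoc, hA1, Matrix.one_mul] at h
    exact h.symm
  have hBmulM : B * M = 1 - z • B := by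
    rw [hM, Matrix.mul_sub, hBB, Matrix.mul_smul, Matrix.mul_one]
  -- cancellation on the right by M
  have hcancel : ∀ X W : Matrix (Fin n) (Fin n) ℝ, X * M = W * M → X = W := by
    intro X W hXW
    have h := congrArg (fun T => T * M⁻¹) hXW
    simpa [Matrix.mul_assoc, hM1] using h
  have hBM : B * M⁻¹ = (-(1/z)) • B + (1/z) • M⁻¹ := by
    apply hcancel
    rw [Matrix.mul_assoc, hMM', Matrix.mul_one, Matrix.add_mul, Matrix.smul_mul,
      Matrix.smul_mul, hBmulM, hMM', smul_sub, smul_smul]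
    have hzz : -(1/z) * z = -1 := by field_simp
    rw [hzz]
    module
  -- dot product transfer
  have hdot : ∀ a b : Fin n → ℝ, (Y.mulVec a) ⬝ᵥ (Y.mulVec b) = a ⬝ᵥ ((Yᵀ * Y).mulVec b) := by
    intro a b
    rw [← Matrix.mulVec_mulVec]
    conv_rhs => rw [Matrix.dotProduct_mulVec, Matrix.vecMul_transpose]
  have hAinvYb : A⁻¹.mulVec (Y.mulVec u) = Y.mulVec (M⁻¹.mulVec u) := by
    rw [Matrix.mulVec_mulVec, hInvY, ← Matrix.mulVec_mulVec]
  -- LHS computation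
  have hLHS : ybar ⬝ᵥ A⁻¹.mulVec ybar
      = c * (c * (u ⬝ᵥ ((Yᵀ * Y) * M⁻¹).mulVec u)) := by
    rw [hybar, Matrix.mulVec_smul, smul_dotProduct, dotProduct_smul, hAinvYb, hdot,
      Matrix.mulVec_mulVec, smul_eq_mul, smul_eq_mul]
  have hYY : ybar ⬝ᵥ ybar = c * (c * (u ⬝ᵥ ((Yᵀ * Y)).mulVec u)) := by
    rw [hybar, smul_dotProduct, dotProduct_smul, hdot, smul_eq_mul, smul_eq_mul]
  have hBu : u ⬝ᵥ B.mulVec u = c * (u ⬝ᵥ (Yᵀ * Y).mulVec u) := by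
    rw [hBdef, Matrix.smul_mulVec, dotProduct_smul, smul_eq_mul]
  have hBMu : u ⬝ᵥ (B * M⁻¹).mulVec u
      = c * (u ⬝ᵥ ((Yᵀ * Y) * M⁻¹).mulVec u) := by
    rw [hBdef, Matrix.smul_mul, Matrix.smul_mulVec, dotProduct_smul, smul_eq_mul]
  have hBMu' : u ⬝ᵥ (B * M⁻¹).mulVec u
      = -(1/z) * (u ⬝ᵥ B.mulVec u) + (1/z) * (u ⬝ᵥ M⁻¹.mulVec u) := by
    rw [hBM, Matrix.add_mulVec, Matrix.smul_mulVec, Matrix.smul_mulVec,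
      dotProduct_add, dotProduct_smul, dotProduct_smul, smul_eq_mul, smul_eq_mul]
  rw [hLHS, hYY]
  have e1 : c * (u ⬝ᵥ ((Yᵀ * Y) * M⁻¹).mulVec u) = u ⬝ᵥ (B * M⁻¹).mulVec u := hBMu.symm
  have e2 : c * (u ⬝ᵥ (Yᵀ * Y).mulVec u) = u ⬝ᵥ B.mulVec u := hBu.symm
  calc c * (c * (u ⬝ᵥ ((Yᵀ * Y) * M⁻¹).mulVec u))
      = c * (u ⬝ᵥ (B * M⁻¹).mulVec u) := by rw [e1]
    _ = c * (-(1/z) * (u ⬝ᵥ B.mulVec u) + (1/z) * (u ⬝ᵥ M⁻¹.mulVec u)) := by rw [hBMu']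
    _ = -(1/z) * (c * (c * (u ⬝ᵥ (Yᵀ * Y).mulVec u))) + 1/z * c * (u ⬝ᵥ M⁻¹.mulVec u) := by
        rw [← e2]; ring
end

section
/- Let A be an invertible symmetric p×p real matrix, and u, v ∈ ℝᵖ with uᵀu > 0 and uᵀv > 0; set w := √(uᵀv/uᵀu)·u − √(uᵀu/uᵀv)·v. Assume γ := uᵀv − vᵀA⁻¹v ≠ 0 and δ := uᵀu + wᵀA⁻¹w + (wᵀA⁻¹v)²/γ ≠ 0. Then the matrix R := A − (1/(uᵀv))·v vᵀ + (1/(uᵀu))·w wᵀ is invertible and tr(R⁻¹) = tr(A⁻¹) + (vᵀA⁻²v)/γ − (1/δ)·wᵀ(A⁻¹ + (A⁻¹ v vᵀ A⁻¹)/γ)² w. -/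
/-!
`R` is obtained from `A` by two rank-one updates, `B = A - vvᵀ/(uᵀv)` and then
`R = B + wwᵀ/(uᵀu)`, so the Sherman–Morrison formula applies twice. Its denominators are
`1 - vᵀA⁻¹v/(uᵀv) = γ/(uᵀv)` and `1 + wᵀB⁻¹w/(uᵀu) = δ/(uᵀu)`, the latter because, `A⁻¹` being
symmetric, `wᵀB⁻¹w = wᵀA⁻¹w + (wᵀA⁻¹v)²/γ`. Taking traces, `tr(M xyᵀ N) = yᵀ N M x` turns each
rank-one correction into a quadratic form.
-/

open Matrix

namespace Matrix

section

variable {n R : Type*} [Fintype n] [CommSemiring R]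

theorem vecMulVec_mul_mul_vecMulVec (M : Matrix n n R) (x y x' y' : n → R) :
    vecMulVec x y * M * vecMulVec x' y' = (y ⬝ᵥ M *ᵥ x') • vecMulVec x y' := by
  rw [mul_assoc, mul_vecMulVec, vecMulVec_mul_vecMulVec, vecMulVec_smul]

theorem trace_mul_vecMulVec_mul (M N : Matrix n n R) (x y : n → R) :
    (M * vecMulVec x y * N).trace = y ⬝ᵥ (N * M) *ᵥ x := by
  rw [trace_mul_comm, ← mul_assoc, mul_vecMulVec, trace_vecMulVec, dotProduct_comm]

theorem dotProduct_mul_vecMulVec_mul_mulVec (M N : Matrix n n R) (a b x y : n → R) :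
    x ⬝ᵥ (M * vecMulVec a b * N) *ᵥ y = (x ⬝ᵥ M *ᵥ a) * (b ⬝ᵥ N *ᵥ y) := by
  rw [mul_vecMulVec, vecMulVec_mul, vecMulVec_mulVec, dotProduct_smul, ← dotProduct_mulVec]
  simp

end

variable {n K : Type*} [Fintype n] [DecidableEq n] [Field K]
  {A : Matrix n n K} {α : K} {x y : n → K}

theorem add_smul_vecMulVec_mul_eq_one (hA : IsUnit A) (h : 1 + α * (y ⬝ᵥ A⁻¹ *ᵥ x) ≠ 0) :
    (A + α • vecMulVec x y) *
      (A⁻¹ - (α / (1 + α * (y ⬝ᵥ A⁻¹ *ᵥ x))) • (A⁻¹ * vecMulVec x y * A⁻¹)) = 1 := by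
  have hAA : A * A⁻¹ = 1 := mul_nonsing_inv A ((isUnit_iff_isUnit_det A).mp hA)
  set s := y ⬝ᵥ A⁻¹ *ᵥ x
  have hxy : vecMulVec x y * (A⁻¹ * vecMulVec x y * A⁻¹) = s • (vecMulVec x y * A⁻¹) := by
    rw [← mul_assoc, ← mul_assoc, vecMulVec_mul_mul_vecMulVec, smul_mul_assoc]
  have hA' : A * (A⁻¹ * vecMulVec x y * A⁻¹) = vecMulVec x y * A⁻¹ := by
    rw [← mul_assoc, ← mul_assoc, hAA, one_mul]
  have hcoeff : α / (1 + α * s) + α / (1 + α * s) * α * s = α := by field_simp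
  rw [mul_sub, add_mul, add_mul, mul_smul_comm, mul_smul_comm, smul_mul_assoc, smul_mul_assoc,
    hAA, hxy, hA', smul_smul, smul_smul, ← add_smul, hcoeff, add_sub_cancel_right]

theorem isUnit_add_smul_vecMulVec (hA : IsUnit A) (h : 1 + α * (y ⬝ᵥ A⁻¹ *ᵥ x) ≠ 0) :
    IsUnit (A + α • vecMulVec x y) :=
  (isUnit_iff_isUnit_det _).mpr <|
    isUnit_det_of_right_inverse (add_smul_vecMulVec_mul_eq_one hA h)

theorem inv_add_smul_vecMulVec (hA : IsUnit A) (h : 1 + α * (y ⬝ᵥ A⁻¹ *ᵥ x) ≠ 0) :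
    (A + α • vecMulVec x y)⁻¹ =
      A⁻¹ - (α / (1 + α * (y ⬝ᵥ A⁻¹ *ᵥ x))) • (A⁻¹ * vecMulVec x y * A⁻¹) :=
  inv_eq_right_inv (add_smul_vecMulVec_mul_eq_one hA h)

theorem trace_inv_add_smul_vecMulVec (hA : IsUnit A) (h : 1 + α * (y ⬝ᵥ A⁻¹ *ᵥ x) ≠ 0) :
    (A + α • vecMulVec x y)⁻¹.trace =
      A⁻¹.trace - α / (1 + α * (y ⬝ᵥ A⁻¹ *ᵥ x)) * (y ⬝ᵥ (A⁻¹ * A⁻¹) *ᵥ x) := by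
  rw [inv_add_smul_vecMulVec hA h, trace_sub, trace_smul, trace_mul_vecMulVec_mul, smul_eq_mul]

end Matrix

theorem stmt_17_general {p : ℕ} (A : Matrix (Fin p) (Fin p) ℝ) (hA : IsUnit A) (hAsymm : Aᵀ = A)
    (u v : Fin p → ℝ) (hu : 0 < u ⬝ᵥ u) (huv : 0 < u ⬝ᵥ v)
    (w : Fin p → ℝ)
    (γ : ℝ) (hγdef : γ = u ⬝ᵥ v - v ⬝ᵥ (A⁻¹).mulVec v) (hγ : γ ≠ 0)
    (δ : ℝ)
    (hδdef : δ = u ⬝ᵥ u + w ⬝ᵥ (A⁻¹).mulVec w + (w ⬝ᵥ (A⁻¹).mulVec v) ^ 2 / γ)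
    (hδ : δ ≠ 0)
    (R : Matrix (Fin p) (Fin p) ℝ)
    (hR : R = A - (1 / (u ⬝ᵥ v)) • vecMulVec v v + (1 / (u ⬝ᵥ u)) • vecMulVec w w) :
    IsUnit R ∧
      (R⁻¹).trace
        = (A⁻¹).trace + (v ⬝ᵥ (A⁻¹ * A⁻¹).mulVec v) / γ
          - (1 / δ) * (w ⬝ᵥ (((A⁻¹ + (1 / γ) • (A⁻¹ * vecMulVec v v * A⁻¹))
              * (A⁻¹ + (1 / γ) • (A⁻¹ * vecMulVec v v * A⁻¹)))).mulVec w) := by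
  have huv₀ := huv.ne'
  have hu₀ := hu.ne'
  let B := A + (-(1 / (u ⬝ᵥ v))) • vecMulVec v v
  have hγB : 1 + -(1 / (u ⬝ᵥ v)) * (v ⬝ᵥ A⁻¹ *ᵥ v) = γ / (u ⬝ᵥ v) := by
    rw [hγdef]; field_simp; ring
  have hγB₀ : 1 + -(1 / (u ⬝ᵥ v)) * (v ⬝ᵥ A⁻¹ *ᵥ v) ≠ 0 := by
    rw [hγB]; exact div_ne_zero hγ huv₀
  have hBinv : B⁻¹ = A⁻¹ + (1 / γ) • (A⁻¹ * vecMulVec v v * A⁻¹) := by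
    rw [inv_add_smul_vecMulVec hA hγB₀, hγB, sub_eq_add_neg, ← neg_smul]
    congr 2; field_simp
  have hsymm : v ⬝ᵥ A⁻¹ *ᵥ w = w ⬝ᵥ A⁻¹ *ᵥ v := by
    rw [dotProduct_mulVec, ← mulVec_transpose, transpose_nonsing_inv, hAsymm, dotProduct_comm]
  have hδB : 1 + 1 / (u ⬝ᵥ u) * (w ⬝ᵥ B⁻¹ *ᵥ w) = δ / (u ⬝ᵥ u) := by
    rw [hBinv, add_mulVec, dotProduct_add, smul_mulVec, dotProduct_smul,
      dotProduct_mul_vecMulVec_mul_mulVec, hsymm, hδdef, smul_eq_mul]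
    field_simp; ring
  have hδB₀ : 1 + 1 / (u ⬝ᵥ u) * (w ⬝ᵥ B⁻¹ *ᵥ w) ≠ 0 := by
    rw [hδB]; exact div_ne_zero hδ hu₀
  have hRB : R = B + (1 / (u ⬝ᵥ u)) • vecMulVec w w := by
    rw [hR, sub_eq_add_neg, ← neg_smul]
  have hB : IsUnit B := isUnit_add_smul_vecMulVec hA hγB₀
  refine ⟨hRB ▸ isUnit_add_smul_vecMulVec hB hδB₀, ?_⟩
  rw [hRB, trace_inv_add_smul_vecMulVec hB hδB₀, ← hBinv, hδB,
    trace_inv_add_smul_vecMulVec hA hγB₀, hγB]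
  field_simp
  ring

theorem stmt_17 {p : ℕ} (A : Matrix (Fin p) (Fin p) ℝ) (hA : IsUnit A) (hAsymm : Aᵀ = A)
    (u v : Fin p → ℝ) (hu : 0 < u ⬝ᵥ u) (huv : 0 < u ⬝ᵥ v)
    (w : Fin p → ℝ)
    (hw : w = Real.sqrt ((u ⬝ᵥ v) / (u ⬝ᵥ u)) • u - Real.sqrt ((u ⬝ᵥ u) / (u ⬝ᵥ v)) • v)
    (γ : ℝ) (hγdef : γ = u ⬝ᵥ v - v ⬝ᵥ (A⁻¹).mulVec v) (hγ : γ ≠ 0)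
    (δ : ℝ)
    (hδdef : δ = u ⬝ᵥ u + w ⬝ᵥ (A⁻¹).mulVec w + (w ⬝ᵥ (A⁻¹).mulVec v) ^ 2 / γ)
    (hδ : δ ≠ 0)
    (R : Matrix (Fin p) (Fin p) ℝ)
    (hR : R = A - (1 / (u ⬝ᵥ v)) • vecMulVec v v + (1 / (u ⬝ᵥ u)) • vecMulVec w w) :
    IsUnit R ∧
      (R⁻¹).trace
        = (A⁻¹).trace + (v ⬝ᵥ (A⁻¹ * A⁻¹).mulVec v) / γ
          - (1 / δ) * (w ⬝ᵥ (((A⁻¹ + (1 / γ) • (A⁻¹ * vecMulVec v v * A⁻¹))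
              * (A⁻¹ + (1 / γ) • (A⁻¹ * vecMulVec v v * A⁻¹)))).mulVec w) :=
  stmt_17_general A hA hAsymm u v hu huv w γ hγdef hγ δ hδdef hδ R hR
end

section
/- Let M be a symmetric p×p real matrix, z a nonzero real number such that A := M − zI is invertible, and y ∈ ℝᵖ with yᵀMy = 1. Set u := My, v := M²y, and assume uᵀu > 0 and uᵀv > 0; set w := √(uᵀv/uᵀu)·u − √(uᵀu/uᵀv)·v, γ := uᵀv − vᵀA⁻¹v, δ := uᵀu + wᵀA⁻¹w + (wᵀA⁻¹v)²/γ, θ(z) := yᵀ(M − zI)⁻¹y, θ′(z) := yᵀ(M − zI)⁻²y, and ψ(z) := 1 + z·yᵀy + z²·θ(z). Assume γ ≠ 0, δ ≠ 0 and ψ(z) ≠ 0. Then (vᵀA⁻²v)/γ − (1/δ)·wᵀ(A⁻¹ + (A⁻¹ v vᵀ A⁻¹)/γ)² w = −1/z − (yᵀy + 2z·θ(z) + z²·θ′(z))/ψ(z). -/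
open Matrix

set_option maxHeartbeats 1000000 in
theorem lemB (z s0 s2 s3 th th' ψ γ δ : ℝ) (hz : z ≠ 0) (hψ : ψ ≠ 0)
    (hs2 : s2 ≠ 0) (hs3 : s3 ≠ 0) (hb3 : s2 + z * ψ ≠ 0)
    (hγe : γ = -(z * (s2 + z * ψ)))
    (hδe : δ = s2 + ((s3 / s2) * ψ + (s2 / s3) * (s3 + z * (s2 + z * ψ)) - 2 * (s2 + z * ψ))
      + ((s3 / s2) * (s2 + z * ψ) ^ 2 + (s2 / s3) * (s3 + z * (s2 + z * ψ)) ^ 2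
        - 2 * (s2 + z * ψ) * (s3 + z * (s2 + z * ψ))) / γ) :
    ((s3 / s2) * (s0 + 2 * z * th + z ^ 2 * th')
          + (s2 / s3) * ((s2 + z * ψ) + z * (ψ + z * (s0 + 2 * z * th + z ^ 2 * th')))
          - 2 * (ψ + z * (s0 + 2 * z * th + z ^ 2 * th')))
        + (2 / γ) * ((s3 / s2) * (s2 + z * ψ) * (ψ + z * (s0 + 2 * z * th + z ^ 2 * th'))
          + (s2 / s3) * (s3 + z * (s2 + z * ψ)) * ((s2 + z * ψ) + z * (ψ + z * (s0 + 2 * z * th + z ^ 2 * th')))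
          - ((s2 + z * ψ) * ((s2 + z * ψ) + z * (ψ + z * (s0 + 2 * z * th + z ^ 2 * th')))
            + (s3 + z * (s2 + z * ψ)) * (ψ + z * (s0 + 2 * z * th + z ^ 2 * th'))))
        + (1 / γ) ^ 2 * (((s3 / s2) * (s2 + z * ψ) ^ 2 + (s2 / s3) * (s3 + z * (s2 + z * ψ)) ^ 2
            - 2 * (s2 + z * ψ) * (s3 + z * (s2 + z * ψ)))
          * ((s2 + z * ψ) + z * (ψ + z * (s0 + 2 * z * th + z ^ 2 * th'))))
      = δ * ((s0 + 2 * z * th + z ^ 2 * th') / ψ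
          - (ψ + z * (s0 + 2 * z * th + z ^ 2 * th')) / (s2 + z * ψ)) := by
  subst hδe; subst hγe
  field_simp
  ring


set_option maxHeartbeats 1000000 in
theorem stmt_18 {p : ℕ} (M : Matrix (Fin p) (Fin p) ℝ) (hM : Mᵀ = M)
    (z : ℝ) (hz : z ≠ 0)
    (A : Matrix (Fin p) (Fin p) ℝ) (hA : A = M - z • (1 : Matrix (Fin p) (Fin p) ℝ))
    (hAinv : IsUnit A)
    (y : Fin p → ℝ) (hy : y ⬝ᵥ M.mulVec y = 1)
    (u v : Fin p → ℝ) (hu : u = M.mulVec y) (hv : v = (M * M).mulVec y)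
    (huu : 0 < u ⬝ᵥ u) (huv : 0 < u ⬝ᵥ v)
    (w : Fin p → ℝ)
    (hw : w = Real.sqrt ((u ⬝ᵥ v) / (u ⬝ᵥ u)) • u - Real.sqrt ((u ⬝ᵥ u) / (u ⬝ᵥ v)) • v)
    (γ : ℝ) (hγdef : γ = u ⬝ᵥ v - v ⬝ᵥ (A⁻¹).mulVec v) (hγ : γ ≠ 0)
    (δ : ℝ)
    (hδdef : δ = u ⬝ᵥ u + w ⬝ᵥ (A⁻¹).mulVec w + (w ⬝ᵥ (A⁻¹).mulVec v) ^ 2 / γ)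
    (hδ : δ ≠ 0)
    (θ θ' : ℝ)
    (hθ : θ = y ⬝ᵥ (A⁻¹).mulVec y) (hθ' : θ' = y ⬝ᵥ (A⁻¹ * A⁻¹).mulVec y)
    (ψ : ℝ) (hψdef : ψ = 1 + z * (y ⬝ᵥ y) + z ^ 2 * θ) (hψ : ψ ≠ 0) :
    (v ⬝ᵥ (A⁻¹ * A⁻¹).mulVec v) / γ
      - (1 / δ) * (w ⬝ᵥ (((A⁻¹ + (1 / γ) • (A⁻¹ * vecMulVec v v * A⁻¹))
          * (A⁻¹ + (1 / γ) • (A⁻¹ * vecMulVec v v * A⁻¹)))).mulVec w)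
      = -(1 / z) - (y ⬝ᵥ y + 2 * z * θ + z ^ 2 * θ') / ψ := by
  set B := A⁻¹ with hB
  have hdet : IsUnit A.det := (isUnit_iff_isUnit_det A).mp hAinv
  have hBA : B * A = 1 := nonsing_inv_mul A hdet
  have hAB : A * B = 1 := mul_nonsing_inv A hdet
  have hMA : M = A + z • (1 : Matrix (Fin p) (Fin p) ℝ) := by rw [hA]; abel
  have hBM : B * M = 1 + z • B := by
    rw [hMA, mul_add, hBA, Matrix.mul_smul, mul_one]
  have hMB : M * B = 1 + z • B := by
    rw [hMA, add_mul, hAB, Matrix.smul_mul, one_mul]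
  have hAT : Aᵀ = A := by rw [hA, transpose_sub, hM, transpose_smul, transpose_one]
  have hBT : Bᵀ = B := by rw [hB, transpose_nonsing_inv, hAT]
  have dd : ∀ (X Y : Matrix (Fin p) (Fin p) ℝ) (a b : Fin p → ℝ),
      (X.mulVec a) ⬝ᵥ (Y.mulVec b) = a ⬝ᵥ (Xᵀ * Y).mulVec b := by
    intro X Y a b
    rw [← mulVec_mulVec, ← vecMul_transpose, ← dotProduct_mulVec]
  have sym : ∀ (S : Matrix (Fin p) (Fin p) ℝ), Sᵀ = S → ∀ (a b : Fin p → ℝ),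
      a ⬝ᵥ S.mulVec b = b ⬝ᵥ S.mulVec a := by
    intro S hS a b
    rw [dotProduct_mulVec, ← mulVec_transpose, hS, dotProduct_comm]
  have hBBT : (B * B)ᵀ = B * B := by rw [transpose_mul, hBT]
  have hs2v : y ⬝ᵥ (M * M).mulVec y = u ⬝ᵥ u := by
    rw [hu, dd M M y y, hM]
  have hs3v : y ⬝ᵥ (M * (M * M)).mulVec y = u ⬝ᵥ v := by
    rw [hu, hv, dd M (M * M) y y, hM]
  -- matrix identities
  have e1 : M * (B * M) = M + z • (1 : Matrix (Fin p) (Fin p) ℝ) + z ^ 2 • B := by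
    rw [hBM, mul_add, mul_one, Matrix.mul_smul, hMB]; module
  have n2 : B * (M * M) = M + z • (1 : Matrix (Fin p) (Fin p) ℝ) + z ^ 2 • B := by
    rw [← mul_assoc, hBM, add_mul, one_mul, Matrix.smul_mul, hBM]; module
  have e2 : M * (B * (M * M)) = M * M + z • M + z ^ 2 • (1 : Matrix (Fin p) (Fin p) ℝ)
      + z ^ 3 • B := by
    rw [n2, mul_add, mul_add, Matrix.mul_smul, Matrix.mul_smul, mul_one, hMB]; module
  have e3 : M * (M * (B * (M * M))) = M * (M * M) + z • (M * M) + z ^ 2 • M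
      + z ^ 3 • (1 : Matrix (Fin p) (Fin p) ℝ) + z ^ 4 • B := by
    rw [e2, mul_add, mul_add, mul_add, Matrix.mul_smul, Matrix.mul_smul, Matrix.mul_smul,
      mul_one, hMB]; module
  have m1 : B * B * M = B + z • (B * B) := by
    rw [mul_assoc, hBM, mul_add, mul_one, Matrix.mul_smul]
  have m3 : M * (B * B) = B + z • (B * B) := by
    rw [← mul_assoc, hMB, add_mul, one_mul, Matrix.smul_mul]
  have m2 : B * B * (M * M) = (1 : Matrix (Fin p) (Fin p) ℝ) + (2 * z) • B
      + z ^ 2 • (B * B) := by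
    rw [← mul_assoc, m1, add_mul, Matrix.smul_mul, hBM, m1]; module
  have e4 : M * (B * B * M) = (1 : Matrix (Fin p) (Fin p) ℝ) + (2 * z) • B
      + z ^ 2 • (B * B) := by
    rw [m1, mul_add, Matrix.mul_smul, hMB, m3]; module
  have e5 : M * (B * B * (M * M)) = M + (2 * z) • (1 : Matrix (Fin p) (Fin p) ℝ)
      + (3 * z ^ 2) • B + z ^ 3 • (B * B) := by
    rw [m2, mul_add, mul_add, mul_one, Matrix.mul_smul, Matrix.mul_smul, hMB, m3]; module
  have e6 : M * (M * (B * B * (M * M))) = M * M + (2 * z) • M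
      + (3 * z ^ 2) • (1 : Matrix (Fin p) (Fin p) ℝ) + (4 * z ^ 3) • B
      + z ^ 4 • (B * B) := by
    rw [e5, mul_add, mul_add, mul_add, Matrix.mul_smul, Matrix.mul_smul, Matrix.mul_smul,
      mul_one, hMB, m3]; module
  -- scalar facts
  have F1 : u ⬝ᵥ B.mulVec u = ψ := by
    conv_lhs => rw [hu, mulVec_mulVec, dd M (B * M) y y, hM, e1]
    simp only [add_mulVec, smul_mulVec, one_mulVec, dotProduct_add, dotProduct_smul,
      smul_eq_mul]
    rw [hy, ← hθ, hψdef]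
  have F2 : u ⬝ᵥ B.mulVec v = u ⬝ᵥ u + z * ψ := by
    conv_lhs => rw [hu, hv, mulVec_mulVec, dd M (B * (M * M)) y y, hM, e2]
    simp only [add_mulVec, smul_mulVec, one_mulVec, dotProduct_add, dotProduct_smul,
      smul_eq_mul]
    rw [hy, ← hθ, hs2v, hψdef]; ring
  have F2' : v ⬝ᵥ B.mulVec u = u ⬝ᵥ u + z * ψ := by rw [sym B hBT v u]; exact F2
  have F3 : v ⬝ᵥ B.mulVec v = u ⬝ᵥ v + z * (u ⬝ᵥ u + z * ψ) := by
    conv_lhs => rw [hv, mulVec_mulVec, dd (M * M) (B * (M * M)) y y, transpose_mul, hM,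
      mul_assoc M M (B * (M * M)), e3]
    simp only [add_mulVec, smul_mulVec, one_mulVec, dotProduct_add, dotProduct_smul,
      smul_eq_mul]
    rw [hy, ← hθ, hs2v, hs3v, hψdef]; ring
  have F4 : u ⬝ᵥ (B * B).mulVec u = y ⬝ᵥ y + 2 * z * θ + z ^ 2 * θ' := by
    conv_lhs => rw [hu, mulVec_mulVec, dd M (B * B * M) y y, hM, e4]
    simp only [add_mulVec, smul_mulVec, one_mulVec, dotProduct_add, dotProduct_smul,
      smul_eq_mul]
    rw [← hθ, ← hθ']
  have F5 : u ⬝ᵥ (B * B).mulVec v = ψ + z * (y ⬝ᵥ y + 2 * z * θ + z ^ 2 * θ') := by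
    conv_lhs => rw [hu, hv, mulVec_mulVec, dd M (B * B * (M * M)) y y, hM, e5]
    simp only [add_mulVec, smul_mulVec, one_mulVec, dotProduct_add, dotProduct_smul,
      smul_eq_mul]
    rw [hy, ← hθ, ← hθ', hψdef]; ring
  have F5' : v ⬝ᵥ (B * B).mulVec u = ψ + z * (y ⬝ᵥ y + 2 * z * θ + z ^ 2 * θ') := by
    rw [sym (B * B) hBBT v u]; exact F5
  have F6 : v ⬝ᵥ (B * B).mulVec v
      = (u ⬝ᵥ u + z * ψ) + z * (ψ + z * (y ⬝ᵥ y + 2 * z * θ + z ^ 2 * θ')) := by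
    conv_lhs => rw [hv, mulVec_mulVec, dd (M * M) (B * B * (M * M)) y y, transpose_mul, hM,
      mul_assoc M M (B * B * (M * M)), e6]
    simp only [add_mulVec, smul_mulVec, one_mulVec, dotProduct_add, dotProduct_smul,
      smul_eq_mul]
    rw [hy, ← hθ, ← hθ', hs2v, hψdef]; ring
  -- sqrt facts
  have hs2 : u ⬝ᵥ u ≠ 0 := ne_of_gt huu
  have hs3 : u ⬝ᵥ v ≠ 0 := ne_of_gt huv
  set a := Real.sqrt ((u ⬝ᵥ v) / (u ⬝ᵥ u)) with haa
  set b := Real.sqrt ((u ⬝ᵥ u) / (u ⬝ᵥ v)) with hbb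
  have ha2 : a ^ 2 = (u ⬝ᵥ v) / (u ⬝ᵥ u) := Real.sq_sqrt (by positivity)
  have hb2 : b ^ 2 = (u ⬝ᵥ u) / (u ⬝ᵥ v) := Real.sq_sqrt (by positivity)
  have hab : a * b = 1 := by
    rw [haa, hbb, ← Real.sqrt_mul (by positivity),
      show (u ⬝ᵥ v) / (u ⬝ᵥ u) * ((u ⬝ᵥ u) / (u ⬝ᵥ v)) = 1 from by field_simp]
    exact Real.sqrt_one
  -- w expansions
  have hQ1 : w ⬝ᵥ B.mulVec v
      = a * (u ⬝ᵥ u + z * ψ) - b * (u ⬝ᵥ v + z * (u ⬝ᵥ u + z * ψ)) := by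
    rw [hw]
    simp only [sub_dotProduct, smul_dotProduct, smul_eq_mul]
    rw [F2, F3]
  have hQ1sq : (w ⬝ᵥ B.mulVec v) ^ 2
      = (u ⬝ᵥ v / (u ⬝ᵥ u)) * (u ⬝ᵥ u + z * ψ) ^ 2
        + (u ⬝ᵥ u / (u ⬝ᵥ v)) * (u ⬝ᵥ v + z * (u ⬝ᵥ u + z * ψ)) ^ 2
        - 2 * (u ⬝ᵥ u + z * ψ) * (u ⬝ᵥ v + z * (u ⬝ᵥ u + z * ψ)) := by
    rw [hQ1]
    linear_combination ((u ⬝ᵥ u + z * ψ) ^ 2) * ha2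
      + ((u ⬝ᵥ v + z * (u ⬝ᵥ u + z * ψ)) ^ 2) * hb2
      - (2 * (u ⬝ᵥ u + z * ψ) * (u ⬝ᵥ v + z * (u ⬝ᵥ u + z * ψ))) * hab
  have hP1 : w ⬝ᵥ B.mulVec w
      = (u ⬝ᵥ v / (u ⬝ᵥ u)) * ψ
        + (u ⬝ᵥ u / (u ⬝ᵥ v)) * (u ⬝ᵥ v + z * (u ⬝ᵥ u + z * ψ))
        - 2 * (u ⬝ᵥ u + z * ψ) := by
    rw [hw]
    simp only [Matrix.mulVec_sub, Matrix.mulVec_smul, sub_dotProduct, dotProduct_sub,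
      smul_dotProduct, dotProduct_smul, smul_eq_mul]
    rw [F1, F2, F2', F3]
    linear_combination ψ * ha2 + (u ⬝ᵥ v + z * (u ⬝ᵥ u + z * ψ)) * hb2
      - (2 * (u ⬝ᵥ u + z * ψ)) * hab
  have hP2 : w ⬝ᵥ (B * B).mulVec w
      = (u ⬝ᵥ v / (u ⬝ᵥ u)) * (y ⬝ᵥ y + 2 * z * θ + z ^ 2 * θ')
        + (u ⬝ᵥ u / (u ⬝ᵥ v)) * ((u ⬝ᵥ u + z * ψ) + z * (ψ + z * (y ⬝ᵥ y + 2 * z * θ + z ^ 2 * θ')))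
        - 2 * (ψ + z * (y ⬝ᵥ y + 2 * z * θ + z ^ 2 * θ')) := by
    rw [hw]
    simp only [Matrix.mulVec_sub, Matrix.mulVec_smul, sub_dotProduct, dotProduct_sub,
      smul_dotProduct, dotProduct_smul, smul_eq_mul]
    rw [F4, F5, F5', F6]
    linear_combination (y ⬝ᵥ y + 2 * z * θ + z ^ 2 * θ') * ha2
      + ((u ⬝ᵥ u + z * ψ) + z * (ψ + z * (y ⬝ᵥ y + 2 * z * θ + z ^ 2 * θ'))) * hb2
      - (2 * (ψ + z * (y ⬝ᵥ y + 2 * z * θ + z ^ 2 * θ'))) * hab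
  have hQ2 : w ⬝ᵥ (B * B).mulVec v
      = a * (ψ + z * (y ⬝ᵥ y + 2 * z * θ + z ^ 2 * θ'))
        - b * ((u ⬝ᵥ u + z * ψ) + z * (ψ + z * (y ⬝ᵥ y + 2 * z * θ + z ^ 2 * θ'))) := by
    rw [hw]
    simp only [sub_dotProduct, smul_dotProduct, smul_eq_mul]
    rw [F5, F6]
  have hQQ : (w ⬝ᵥ B.mulVec v) * (w ⬝ᵥ (B * B).mulVec v)
      = (u ⬝ᵥ v / (u ⬝ᵥ u)) * (u ⬝ᵥ u + z * ψ) * (ψ + z * (y ⬝ᵥ y + 2 * z * θ + z ^ 2 * θ'))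
        + (u ⬝ᵥ u / (u ⬝ᵥ v)) * (u ⬝ᵥ v + z * (u ⬝ᵥ u + z * ψ))
            * ((u ⬝ᵥ u + z * ψ) + z * (ψ + z * (y ⬝ᵥ y + 2 * z * θ + z ^ 2 * θ')))
        - ((u ⬝ᵥ u + z * ψ) * ((u ⬝ᵥ u + z * ψ) + z * (ψ + z * (y ⬝ᵥ y + 2 * z * θ + z ^ 2 * θ')))
          + (u ⬝ᵥ v + z * (u ⬝ᵥ u + z * ψ)) * (ψ + z * (y ⬝ᵥ y + 2 * z * θ + z ^ 2 * θ'))) := by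
    rw [hQ1, hQ2]
    linear_combination ((u ⬝ᵥ u + z * ψ) * (ψ + z * (y ⬝ᵥ y + 2 * z * θ + z ^ 2 * θ'))) * ha2
      + ((u ⬝ᵥ v + z * (u ⬝ᵥ u + z * ψ))
          * ((u ⬝ᵥ u + z * ψ) + z * (ψ + z * (y ⬝ᵥ y + 2 * z * θ + z ^ 2 * θ')))) * hb2
      - ((u ⬝ᵥ u + z * ψ) * ((u ⬝ᵥ u + z * ψ) + z * (ψ + z * (y ⬝ᵥ y + 2 * z * θ + z ^ 2 * θ')))
          + (u ⬝ᵥ v + z * (u ⬝ᵥ u + z * ψ)) * (ψ + z * (y ⬝ᵥ y + 2 * z * θ + z ^ 2 * θ'))) * hab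
  -- the C matrix
  have hVm : ∀ x : Fin p → ℝ, (vecMulVec v v).mulVec x = (v ⬝ᵥ x) • v := by
    intro x
    ext i
    simp only [vecMulVec_apply, mulVec, dotProduct, Pi.smul_apply, smul_eq_mul,
      Finset.sum_mul, Finset.mul_sum]
    exact Finset.sum_congr rfl (fun j _ => by ring)
  have hVT : (vecMulVec v v)ᵀ = vecMulVec v v := by
    ext i j
    simp only [transpose_apply, vecMulVec_apply]
    ring
  have hCsym : (B + (1 / γ) • (B * vecMulVec v v * B))ᵀ
      = B + (1 / γ) • (B * vecMulVec v v * B) := by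
    rw [transpose_add, transpose_smul, transpose_mul, transpose_mul, hBT, hVT, mul_assoc]
  have hCw : (B + (1 / γ) • (B * vecMulVec v v * B)).mulVec w
      = B.mulVec w + ((1 / γ) * (v ⬝ᵥ B.mulVec w)) • B.mulVec v := by
    rw [add_mulVec, smul_mulVec, mul_assoc, ← mulVec_mulVec, ← mulVec_mulVec,
      hVm (B.mulVec w), mulVec_smul, smul_smul]
  have hWC : w ⬝ᵥ (((B + (1 / γ) • (B * vecMulVec v v * B))
        * (B + (1 / γ) • (B * vecMulVec v v * B)))).mulVec w
      = ((B + (1 / γ) • (B * vecMulVec v v * B)).mulVec w)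
        ⬝ᵥ ((B + (1 / γ) • (B * vecMulVec v v * B)).mulVec w) := by
    rw [← mulVec_mulVec, dotProduct_mulVec, ← mulVec_transpose, hCsym]
  have hBIGdot : w ⬝ᵥ (((B + (1 / γ) • (B * vecMulVec v v * B))
        * (B + (1 / γ) • (B * vecMulVec v v * B)))).mulVec w
      = (w ⬝ᵥ (B * B).mulVec w)
        + 2 * ((1 / γ) * (w ⬝ᵥ B.mulVec v)) * (w ⬝ᵥ (B * B).mulVec v)
        + ((1 / γ) * (w ⬝ᵥ B.mulVec v)) ^ 2 * (v ⬝ᵥ (B * B).mulVec v) := by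
    rw [hWC, hCw]
    simp only [dotProduct_add, add_dotProduct, dotProduct_smul, smul_dotProduct, smul_eq_mul]
    rw [dd B B w w, dd B B w v, dd B B v w, dd B B v v, hBT]
    rw [sym B hBT v w, sym (B * B) hBBT v w]
    ring
  have hBIG : w ⬝ᵥ (((B + (1 / γ) • (B * vecMulVec v v * B))
        * (B + (1 / γ) • (B * vecMulVec v v * B)))).mulVec w
      = ((u ⬝ᵥ v / (u ⬝ᵥ u)) * (y ⬝ᵥ y + 2 * z * θ + z ^ 2 * θ')
          + (u ⬝ᵥ u / (u ⬝ᵥ v)) * ((u ⬝ᵥ u + z * ψ) + z * (ψ + z * (y ⬝ᵥ y + 2 * z * θ + z ^ 2 * θ')))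
          - 2 * (ψ + z * (y ⬝ᵥ y + 2 * z * θ + z ^ 2 * θ')))
        + (2 / γ) * ((u ⬝ᵥ v / (u ⬝ᵥ u)) * (u ⬝ᵥ u + z * ψ) * (ψ + z * (y ⬝ᵥ y + 2 * z * θ + z ^ 2 * θ'))
          + (u ⬝ᵥ u / (u ⬝ᵥ v)) * (u ⬝ᵥ v + z * (u ⬝ᵥ u + z * ψ)) * ((u ⬝ᵥ u + z * ψ) + z * (ψ + z * (y ⬝ᵥ y + 2 * z * θ + z ^ 2 * θ')))
          - ((u ⬝ᵥ u + z * ψ) * ((u ⬝ᵥ u + z * ψ) + z * (ψ + z * (y ⬝ᵥ y + 2 * z * θ + z ^ 2 * θ')))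
            + (u ⬝ᵥ v + z * (u ⬝ᵥ u + z * ψ)) * (ψ + z * (y ⬝ᵥ y + 2 * z * θ + z ^ 2 * θ'))))
        + (1 / γ) ^ 2 * (((u ⬝ᵥ v / (u ⬝ᵥ u)) * (u ⬝ᵥ u + z * ψ) ^ 2
            + (u ⬝ᵥ u / (u ⬝ᵥ v)) * (u ⬝ᵥ v + z * (u ⬝ᵥ u + z * ψ)) ^ 2
            - 2 * (u ⬝ᵥ u + z * ψ) * (u ⬝ᵥ v + z * (u ⬝ᵥ u + z * ψ)))
          * ((u ⬝ᵥ u + z * ψ) + z * (ψ + z * (y ⬝ᵥ y + 2 * z * θ + z ^ 2 * θ')))) := by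
    rw [hBIGdot, hP2, F6]
    linear_combination (2 / γ) * hQQ
      + ((1 / γ) ^ 2 * ((u ⬝ᵥ u + z * ψ) + z * (ψ + z * (y ⬝ᵥ y + 2 * z * θ + z ^ 2 * θ')))) * hQ1sq
  have hγ2 : γ = -(z * (u ⬝ᵥ u + z * ψ)) := by rw [hγdef, F3]; ring
  have hb3ne : u ⬝ᵥ u + z * ψ ≠ 0 := by
    intro h
    exact hγ (by rw [hγ2, h, mul_zero, neg_zero])
  have hδ3 : δ = u ⬝ᵥ u + ((u ⬝ᵥ v / (u ⬝ᵥ u)) * ψ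
        + (u ⬝ᵥ u / (u ⬝ᵥ v)) * (u ⬝ᵥ v + z * (u ⬝ᵥ u + z * ψ)) - 2 * (u ⬝ᵥ u + z * ψ))
      + ((u ⬝ᵥ v / (u ⬝ᵥ u)) * (u ⬝ᵥ u + z * ψ) ^ 2
        + (u ⬝ᵥ u / (u ⬝ᵥ v)) * (u ⬝ᵥ v + z * (u ⬝ᵥ u + z * ψ)) ^ 2
        - 2 * (u ⬝ᵥ u + z * ψ) * (u ⬝ᵥ v + z * (u ⬝ᵥ u + z * ψ))) / γ := by
    rw [hδdef, hP1, hQ1sq]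
  have stepA : ((u ⬝ᵥ u + z * ψ) + z * (ψ + z * (y ⬝ᵥ y + 2 * z * θ + z ^ 2 * θ'))) / γ
      = -(1 / z) - (ψ + z * (y ⬝ᵥ y + 2 * z * θ + z ^ 2 * θ')) / (u ⬝ᵥ u + z * ψ) := by
    rw [hγ2]
    field_simp
    ring
  have stepB := lemB z (y ⬝ᵥ y) (u ⬝ᵥ u) (u ⬝ᵥ v) θ θ' ψ γ δ hz hψ hs2 hs3 hb3ne hγ2 hδ3
  rw [F6, hBIG, stepB, stepA, one_div δ, inv_mul_cancel_left₀ hδ]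
  ring
end
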